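/- Let H be an acceptable Hintikka set and s, t closed terms of the same type. If the Leibniz equation (s ≐ t) ∈ H, then the primitive equation (s = t) ∈ H. -/

import Mathlib

namespace HintikkaHOL

/-- Simple types over base types `o` (Booleans) and `i` (individuals). -/
inductive Ty : Type
  | o : Ty
  | i : Ty
  | arr : Ty → Ty → Ty
deriving DecidableEq

open Ty

/-- Typed de Bruijn variables. -/
inductive Var : List Ty → Ty → Type
  | vz {Γ τ} : Var (τ :: Γ) τ
  | vs {Γ σ τ} : Var Γ τ → Var (σ :: Γ) τ

/-- Terms of Church's type theory over a signature `S` of parameters,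
with primitive equality `eq τ : τ → τ → o` as the only logical constant. -/
inductive Tm (S : Ty → Type) : List Ty → Ty → Type
  | var {Γ τ} : Var Γ τ → Tm S Γ τ
  | par {Γ τ} : S τ → Tm S Γ τ
  | eq {Γ} (τ : Ty) : Tm S Γ (arr τ (arr τ o))
  | app {Γ a b} : Tm S Γ (arr a b) → Tm S Γ a → Tm S Γ b
  | lam {Γ a b} : Tm S (a :: Γ) b → Tm S Γ (arr a b)

variable {S : Ty → Type}

/-- Renamings. -/
abbrev Ren (Γ Δ : List Ty) : Type := ∀ τ, Var Γ τ → Var Δ τ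

def Ren.lift {Γ Δ} (r : Ren Γ Δ) (σ : Ty) : Ren (σ :: Γ) (σ :: Δ)
  | _, .vz => .vz
  | _, .vs w => .vs (r _ w)

def rename {Γ Δ} (r : Ren Γ Δ) : ∀ {τ}, Tm S Γ τ → Tm S Δ τ
  | _, .var v => .var (r _ v)
  | _, .par p => .par p
  | _, .eq τ => .eq τ
  | _, .app f a => .app (rename r f) (rename r a)
  | _, .lam b => .lam (rename (Ren.lift r _) b)

/-- Substitutions. -/
abbrev Sub (S : Ty → Type) (Γ Δ : List Ty) : Type := ∀ τ, Var Γ τ → Tm S Δ τ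

def Sub.lift {Γ Δ} (s : Sub S Γ Δ) (σ : Ty) : Sub S (σ :: Γ) (σ :: Δ)
  | _, .vz => .var .vz
  | _, .vs w => rename (fun _ u => Var.vs u) (s _ w)

def subst {Γ Δ} (s : Sub S Γ Δ) : ∀ {τ}, Tm S Γ τ → Tm S Δ τ
  | _, .var v => s _ v
  | _, .par p => .par p
  | _, .eq τ => .eq τ
  | _, .app f a => .app (subst s f) (subst s a)
  | _, .lam b => .lam (subst (Sub.lift s _) b)

/-- The substitution sending the outermost variable to `a`. -/
def Sub.single {Γ σ} (a : Tm S Γ σ) : Sub S (σ :: Γ) Γ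
  | _, .vz => a
  | _, .vs w => .var w

def subst1 {Γ σ τ} (a : Tm S Γ σ) (b : Tm S (σ :: Γ) τ) : Tm S Γ τ :=
  subst (Sub.single a) b

/-- Weakening of a closed term into any context. -/
def Ren.fromEmpty {Γ} : Ren [] Γ := fun _ v => nomatch v

def wk0 {Γ τ} (t : Tm S [] τ) : Tm S Γ τ :=
  rename Ren.fromEmpty t

/-- The equation `s =^τ t`. -/
def eqT {Γ} (τ : Ty) (s t : Tm S Γ τ) : Tm S Γ o :=
  .app (.app (.eq τ) s) t

/-- `⊤ := (=^o) =^{ooo} (=^o)`. -/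
def topT {Γ} : Tm S Γ o :=
  eqT (arr o (arr o o)) (.eq o) (.eq o)

/-- `⊥ := (λP:o. P) =^{oo} (λP:o. ⊤)`. -/
def botT {Γ} : Tm S Γ o :=
  eqT (arr o o) (.lam (.var .vz)) (.lam topT)

/-- `¬ := λP:o. P =^o ⊥`. -/
def notC {Γ} : Tm S Γ (arr o o) :=
  .lam (eqT o (.var .vz) botT)

/-- `¬ s`. -/
def negT {Γ} (s : Tm S Γ o) : Tm S Γ o :=
  .app notC s

/-- `∧ := λP Q. (λF:ooo. F ⊤ ⊤) =^{o(ooo)} (λF. F P Q)`. -/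
def andC {Γ} : Tm S Γ (arr o (arr o o)) :=
  .lam (.lam (eqT (arr (arr o (arr o o)) o)
    (.lam (.app (.app (.var .vz) topT) topT))
    (.lam (.app (.app (.var .vz) (.var (.vs (.vs .vz)))) (.var (.vs .vz))))))

/-- `∨ := λP Q. ¬(¬P ∧ ¬Q)`. -/
def orC {Γ} : Tm S Γ (arr o (arr o o)) :=
  .lam (.lam (negT (.app (.app andC (negT (.var (.vs .vz)))) (negT (.var .vz)))))

/-- `⇒ := λP Q. ¬P ∨ Q`. -/
def impC {Γ} : Tm S Γ (arr o (arr o o)) :=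
  .lam (.lam (.app (.app orC (negT (.var (.vs .vz)))) (.var .vz)))

/-- `Π^τ := λP:oτ. P =^{oτ} (λX:τ. ⊤)`. -/
def piC {Γ} (τ : Ty) : Tm S Γ (arr (arr τ o) o) :=
  .lam (eqT (arr τ o) (.var .vz) (.lam topT))

/-- Leibniz equality `s ≐ t := Π^{oτ} (λP:oτ. (P s) ⇒ (P t))`. -/
def leibT {Γ τ} (s t : Tm S Γ τ) : Tm S Γ o :=
  .app (piC (arr τ o))
    (.lam (.app (.app impC (.app (.var .vz) (rename (fun _ v => Var.vs v) s)))
                (.app (.var .vz) (rename (fun _ v => Var.vs v) t))))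

/-- βη-conversion. -/
inductive Conv : ∀ {Γ : List Ty} {τ : Ty}, Tm S Γ τ → Tm S Γ τ → Prop
  | refl {Γ τ} (s : Tm S Γ τ) : Conv s s
  | symm {Γ τ} {s t : Tm S Γ τ} : Conv s t → Conv t s
  | trans {Γ τ} {s t u : Tm S Γ τ} : Conv s t → Conv t u → Conv s u
  | appCongr {Γ a b} {f f' : Tm S Γ (arr a b)} {s s' : Tm S Γ a} :
      Conv f f' → Conv s s' → Conv (.app f s) (.app f' s')
  | lamCongr {Γ a b} {s s' : Tm S (a :: Γ) b} :
      Conv s s' → Conv (.lam s) (.lam s')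
  | beta {Γ a b} (body : Tm S (a :: Γ) b) (s : Tm S Γ a) :
      Conv (.app (.lam body) s) (subst1 s body)
  | eta {Γ a b} (f : Tm S Γ (arr a b)) :
      Conv (.lam (.app (rename (fun _ v => Var.vs v) f) (.var .vz))) f

/-- Atomic formulas: head symbol is a parameter (or a variable). -/
inductive Atomic : ∀ {Γ : List Ty} {τ : Ty}, Tm S Γ τ → Prop
  | par {Γ τ} (p : S τ) : Atomic (Tm.par (Γ := Γ) p)
  | var {Γ τ} (v : Var Γ τ) : Atomic (Tm.var (S := S) v)
  | app {Γ a b} {f : Tm S Γ (arr a b)} {s : Tm S Γ a} : Atomic f → Atomic (.app f s)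

/-- Paired spines of closed arguments, for the decomposition property `∇_d`:
a value of `Spine2 S σ τ` is a list of pairs `(sⁱ, tⁱ)` of closed terms turning a head
of type `σ` into two applications `h s¹ … sⁿ` and `h t¹ … tⁿ` of type `τ`. -/
inductive Spine2 (S : Ty → Type) : Ty → Ty → Type
  | nil {τ} : Spine2 S τ τ
  | cons {a σ τ} (s t : Tm S [] a) (rest : Spine2 S σ τ) : Spine2 S (arr a σ) τ

def appSpineL : ∀ {σ τ}, Tm S [] σ → Spine2 S σ τ → Tm S [] τ
  | _, _, h, .nil => h
  | _, _, h, .cons s _ rest => appSpineL (.app h s) rest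

def appSpineR : ∀ {σ τ}, Tm S [] σ → Spine2 S σ τ → Tm S [] τ
  | _, _, h, .nil => h
  | _, _, h, .cons _ t rest => appSpineR (.app h t) rest

/-- `∃ i, (sⁱ ≠ tⁱ) ∈ H` for a paired spine. -/
def ExistsNeq (H : Set (Tm S [] o)) : ∀ {σ τ}, Spine2 S σ τ → Prop
  | _, _, .nil => False
  | _, _, .cons (a := a) s t rest => negT (eqT a s t) ∈ H ∨ ExistsNeq H rest

/-- Steen's acceptable Hintikka sets: sets of closed formulas (sentences) satisfying
the ten properties `∇_c, ∇_βη, ∇_=^r, ∇_=^s, ∇_b^+, ∇_b^-, ∇_f^+, ∇_f^-, ∇_m, ∇_d`. -/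
structure Acceptable (S : Ty → Type) (H : Set (Tm S [] o)) : Prop where
  nabla_c : ∀ s : Tm S [] o, ¬ (s ∈ H ∧ negT s ∈ H)
  nabla_betaEta : ∀ s t : Tm S [] o, Conv s t → s ∈ H → t ∈ H
  nabla_eq_r : ∀ {τ} (s : Tm S [] τ), negT (eqT τ s s) ∉ H
  nabla_eq_s : ∀ {τ} (u : Tm S [τ] o) (s t : Tm S [] τ),
      subst1 s u ∈ H → eqT τ s t ∈ H → subst1 t u ∈ H
  nabla_b_pos : ∀ s t : Tm S [] o, eqT o s t ∈ H →
      (s ∈ H ∧ t ∈ H) ∨ (negT s ∈ H ∧ negT t ∈ H)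
  nabla_b_neg : ∀ s t : Tm S [] o, negT (eqT o s t) ∈ H →
      (s ∈ H ∧ negT t ∈ H) ∨ (negT s ∈ H ∧ t ∈ H)
  nabla_f_pos : ∀ {a b} (f g : Tm S [] (arr a b)), eqT (arr a b) f g ∈ H →
      ∀ s : Tm S [] a, eqT b (.app f s) (.app g s) ∈ H
  nabla_f_neg : ∀ {a b} (f g : Tm S [] (arr a b)), negT (eqT (arr a b) f g) ∈ H →
      ∃ w : S a, negT (eqT b (.app f (.par w)) (.app g (.par w))) ∈ H
  nabla_m : ∀ s t : Tm S [] o, Atomic s → Atomic t → s ∈ H → negT t ∈ H →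
      negT (eqT o s t) ∈ H
  nabla_d : ∀ {σ τ} (h : Tm S [] σ) (sp : Spine2 S σ τ),
      negT (eqT τ (appSpineL h sp) (appSpineR h sp)) ∈ H → ExistsNeq H sp

/-- `H` is saturated iff `s ∈ H` or `¬s ∈ H` for every closed formula `s`. -/
def Saturated (H : Set (Tm S [] o)) : Prop :=
  ∀ s : Tm S [] o, s ∈ H ∨ negT s ∈ H

variable {S : Ty → Type} {H : Set (Tm S [] Ty.o)}

/-!
Instantiate the Leibniz equation `Π (λP. P s ⇒ P t)` at the predicate `λx. s = x`: by `∇_f^+` and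
`∇_b^+` this puts `(s = s) ⇒ (s = t)` into `H`. Since `∇_=^r` excludes `¬(s = s)`, it remains to see
that `P ⇒ Q ∈ H` forces `¬P ∈ H` or `Q ∈ H`, i.e. that `H` decomposes the defined connectives.
The only non-routine case is a negated conjunction `¬(P ∧ Q)`, i.e. `(λF. F ⊤ ⊤) ≠ (λF. F P Q)`:
`∇_f^-` gives a parameter `w` with `w ⊤ ⊤ ≠ w P Q`, and `∇_d` then yields `⊤ ≠ P` or `⊤ ≠ Q`.
-/

theorem rename_rename {Γ Δ E τ} (r₁ : Ren Γ Δ) (r₂ : Ren Δ E) (t : Tm S Γ τ) :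
    rename r₂ (rename r₁ t) = rename (fun τ v => r₂ τ (r₁ τ v)) t := by
  induction t generalizing Δ E with
  | var | par | eq => rfl
  | app f a ihf iha => simp only [rename, ihf, iha]
  | lam b ih =>
    simp only [rename, ih]
    congr 2
    funext _ v
    cases v <;> rfl

theorem subst_rename {Γ Δ E τ} (r : Ren Γ Δ) (σ : Sub S Δ E) (t : Tm S Γ τ) :
    subst σ (rename r t) = subst (fun τ v => σ τ (r τ v)) t := by
  induction t generalizing Δ E with
  | var | par | eq => rfl
  | app f a ihf iha => simp only [rename, subst, ihf, iha]
  | lam b ih =>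
    simp only [rename, subst, ih]
    congr 2
    funext _ v
    cases v <;> rfl

theorem subst_var_eq_rename {Γ Δ τ} (r : Ren Γ Δ) (t : Tm S Γ τ) :
    subst (fun τ v => .var (r τ v)) t = rename r t := by
  induction t generalizing Δ with
  | var | par | eq => rfl
  | app f a ihf iha => simp only [rename, subst, ihf, iha]
  | @lam _ a _ b ih =>
    have hlift : Sub.lift (S := S) (fun τ v => .var (r τ v)) a =
        fun τ v => .var (Ren.lift r a τ v) := by
      funext _ v
      cases v <;> rfl
    simp only [rename, subst, hlift, ih]

theorem rename_id {Γ τ} (t : Tm S Γ τ) : rename (fun _ v => v) t = t := by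
  induction t with
  | var | par | eq => rfl
  | app f a ihf iha => simp only [rename, ihf, iha]
  | @lam Γ a _ b ih =>
    have hlift : Ren.lift (fun _ v => v) a = fun _ (v : Var (a :: Γ) _) => v := by
      funext _ v
      cases v <;> rfl
    simp only [rename, hlift, ih]

theorem Ren.eq_fromEmpty {Γ} (r : Ren [] Γ) : r = Ren.fromEmpty :=
  funext fun _ => funext fun v => nomatch v

theorem Sub.eq_var_fromEmpty {Γ} (σ : Sub S [] Γ) : σ = fun τ v => .var (Ren.fromEmpty τ v) :=
  funext fun _ => funext fun v => nomatch v

@[simp]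
theorem rename_closed {Γ τ} (r : Ren [] Γ) (t : Tm S [] τ) : rename r t = wk0 t := by
  rw [Ren.eq_fromEmpty r, wk0]

@[simp]
theorem subst_closed {Γ τ} (σ : Sub S [] Γ) (t : Tm S [] τ) : subst σ t = wk0 t := by
  rw [Sub.eq_var_fromEmpty σ, subst_var_eq_rename, wk0]

@[simp]
theorem rename_wk0 {Γ Δ τ} (r : Ren Γ Δ) (t : Tm S [] τ) : rename r (wk0 t) = wk0 t := by
  rw [wk0, rename_rename, rename_closed]

@[simp]
theorem subst_wk0 {Γ Δ τ} (σ : Sub S Γ Δ) (t : Tm S [] τ) : subst σ (wk0 t) = wk0 t := by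
  rw [wk0, subst_rename, subst_closed]

@[simp]
theorem wk0_nil {τ} (t : Tm S [] τ) : wk0 (Γ := []) t = t := by
  rw [wk0, Ren.eq_fromEmpty (fun _ v => v) |>.symm, rename_id]

@[simp]
theorem subst_eqT {Γ Δ τ} (σ : Sub S Γ Δ) (a b : Tm S Γ τ) :
    subst σ (eqT τ a b) = eqT τ (subst σ a) (subst σ b) := rfl

@[simp]
theorem subst_negT {Γ Δ} (σ : Sub S Γ Δ) (P : Tm S Γ o) : subst σ (negT P) = negT (subst σ P) :=
  rfl

@[simp] theorem subst_topT {Γ Δ} (σ : Sub S Γ Δ) : subst σ topT = topT := rfl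
@[simp] theorem subst_andC {Γ Δ} (σ : Sub S Γ Δ) : subst σ andC = andC := rfl
@[simp] theorem subst_orC {Γ Δ} (σ : Sub S Γ Δ) : subst σ orC = orC := rfl
@[simp] theorem subst_impC {Γ Δ} (σ : Sub S Γ Δ) : subst σ impC = impC := rfl

theorem Conv.beta_of_eq {Γ a b} {body : Tm S (a :: Γ) b} {s : Tm S Γ a} {u : Tm S Γ b}
    (h : subst1 s body = u) : Conv (.app (.lam body) s) u :=
  h ▸ Conv.beta body s

theorem Conv.eqT_congr {Γ τ} {s s' t t' : Tm S Γ τ} (hs : Conv s s') (ht : Conv t t') :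
    Conv (eqT τ s t) (eqT τ s' t') :=
  .appCongr (.appCongr (.refl _) hs) ht

theorem Conv.negT_congr {Γ} {s s' : Tm S Γ o} (h : Conv s s') : Conv (negT s) (negT s') :=
  .appCongr (.refl _) h

theorem Conv.beta₂_of_eq {Γ a b c} {f : Tm S (b :: a :: Γ) c} {s : Tm S Γ a} {t : Tm S Γ b}
    {u : Tm S Γ c} (h : subst1 t (subst (Sub.lift (Sub.single s) b) f) = u) :
    Conv (.app (.app (.lam (.lam f)) s) t) u :=
  .trans (.appCongr (.beta _ _) (.refl _)) (.beta_of_eq h)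

theorem conv_negT_eqT_botT {Γ} (P : Tm S Γ o) : Conv (negT P) (eqT o P botT) :=
  .beta_of_eq rfl

theorem conv_piC {Γ τ} (P : Tm S Γ (arr τ o)) :
    Conv (.app (piC τ) P) (eqT (arr τ o) P (.lam topT)) :=
  .beta_of_eq rfl

theorem conv_impC (P Q : Tm S [] o) :
    Conv (.app (.app impC P) Q) (.app (.app orC (negT P)) Q) :=
  .beta₂_of_eq (by simp [subst1, subst, Sub.single, Sub.lift])

theorem conv_orC (P Q : Tm S [] o) :
    Conv (.app (.app orC P) Q) (negT (.app (.app andC (negT P)) (negT Q))) :=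
  .beta₂_of_eq (by simp [subst1, subst, Sub.single, Sub.lift])

theorem conv_andC (P Q : Tm S [] o) :
    Conv (.app (.app andC P) Q) (eqT (arr (arr o (arr o o)) o)
      (.lam (.app (.app (.var .vz) topT) topT))
      (.lam (.app (.app (.var .vz) (wk0 P)) (wk0 Q)))) :=
  .beta₂_of_eq (by simp [subst1, subst, Sub.single, Sub.lift, rename])

namespace Acceptable

variable (hH : Acceptable S H)
include hH

theorem negT_topT_not_mem : negT topT ∉ H :=
  hH.nabla_eq_r (.eq o)

theorem botT_not_mem : botT ∉ H := by
  intro hbot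
  have hnegTop : eqT o (negT topT) topT ∈ H :=
    hH.nabla_betaEta _ _ (.eqT_congr (.beta_of_eq rfl) (.beta_of_eq rfl))
      (hH.nabla_f_pos _ _ hbot (negT topT))
  rcases hH.nabla_b_pos _ _ hnegTop with ⟨h, -⟩ | ⟨-, h⟩ <;> exact hH.negT_topT_not_mem h

theorem mem_of_eqT_topT_mem {P : Tm S [] o} (h : eqT o P topT ∈ H) : P ∈ H := by
  rcases hH.nabla_b_pos _ _ h with ⟨hP, -⟩ | ⟨-, hnegTop⟩
  · exact hP
  · exact absurd hnegTop hH.negT_topT_not_mem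

theorem negT_mem_of_negT_eqT_topT_mem {P : Tm S [] o} (h : negT (eqT o topT P) ∈ H) :
    negT P ∈ H := by
  rcases hH.nabla_b_neg _ _ h with ⟨-, hP⟩ | ⟨hnegTop, -⟩
  · exact hP
  · exact absurd hnegTop hH.negT_topT_not_mem

theorem mem_of_negT_negT_mem {P : Tm S [] o} (h : negT (negT P) ∈ H) : P ∈ H := by
  have h' : eqT o (eqT o P botT) botT ∈ H :=
    hH.nabla_betaEta _ _
      (.trans (conv_negT_eqT_botT _) (.eqT_congr (conv_negT_eqT_botT P) (.refl _))) h
  rcases hH.nabla_b_pos _ _ h' with ⟨-, hbot⟩ | ⟨hneg, -⟩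
  · exact absurd hbot hH.botT_not_mem
  rcases hH.nabla_b_neg _ _ hneg with ⟨hP, -⟩ | ⟨-, hbot⟩
  · exact hP
  · exact absurd hbot hH.botT_not_mem

theorem negT_mem_or_negT_mem_of_negT_andC_mem {P Q : Tm S [] o}
    (h : negT (.app (.app andC P) Q) ∈ H) : negT P ∈ H ∨ negT Q ∈ H := by
  have hbot := hH.nabla_betaEta _ _
    (.trans (conv_negT_eqT_botT _) (.eqT_congr (conv_andC P Q) (.refl _))) h
  rcases hH.nabla_b_pos _ _ hbot with ⟨-, hbot⟩ | ⟨hne, -⟩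
  · exact absurd hbot hH.botT_not_mem
  obtain ⟨w, hw⟩ := hH.nabla_f_neg _ _ hne
  have hw' : negT (eqT o (appSpineL (.par w) (.cons topT P (.cons topT Q .nil)))
      (appSpineR (.par w) (.cons topT P (.cons topT Q .nil)))) ∈ H :=
    hH.nabla_betaEta _ _ (.negT_congr (.eqT_congr (.beta_of_eq rfl)
      (.beta_of_eq (by simp [subst1, subst, Sub.single, appSpineR])))) hw
  rcases hH.nabla_d _ _ hw' with hP | hQ | hfalse
  · exact .inl (hH.negT_mem_of_negT_eqT_topT_mem hP)
  · exact .inr (hH.negT_mem_of_negT_eqT_topT_mem hQ)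
  · exact hfalse.elim

theorem mem_or_mem_of_orC_mem {P Q : Tm S [] o} (h : .app (.app orC P) Q ∈ H) :
    P ∈ H ∨ Q ∈ H :=
  (hH.negT_mem_or_negT_mem_of_negT_andC_mem (hH.nabla_betaEta _ _ (conv_orC P Q) h)).imp
    hH.mem_of_negT_negT_mem hH.mem_of_negT_negT_mem

theorem negT_mem_or_mem_of_impC_mem {P Q : Tm S [] o} (h : .app (.app impC P) Q ∈ H) :
    negT P ∈ H ∨ Q ∈ H :=
  hH.mem_or_mem_of_orC_mem (hH.nabla_betaEta _ _ (conv_impC P Q) h)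

theorem app_mem_of_piC_mem {τ} {P : Tm S [] (arr τ o)} (h : .app (piC τ) P ∈ H)
    (u : Tm S [] τ) : .app P u ∈ H := by
  have hP := hH.nabla_f_pos _ _ (hH.nabla_betaEta _ _ (conv_piC P) h) u
  exact hH.mem_of_eqT_topT_mem
    (hH.nabla_betaEta _ _ (.eqT_congr (.refl _) (.beta_of_eq rfl)) hP)

end Acceptable

/-- If the Leibniz equation `(s ≐ t) ∈ H`, then the primitive equation `(s = t) ∈ H`. -/
theorem leib_to_eq_mem (hH : Acceptable S H) {τ : Ty} (s t : Tm S [] τ)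
    (h : leibT s t ∈ H) : eqT τ s t ∈ H := by
  set r : Tm S [] (arr τ o) := .lam (eqT τ (wk0 s) (.var .vz))
  have hr (u : Tm S [] τ) : Conv (.app r u) (eqT τ s u) :=
    .beta_of_eq (by simp [subst1, subst, Sub.single])
  have himp : .app (.app impC (eqT τ s s)) (eqT τ s t) ∈ H :=
    hH.nabla_betaEta _ _
      (.trans (.beta_of_eq (by simp [subst1, subst, Sub.single]))
        (.appCongr (.appCongr (.refl _) (hr s)) (hr t)))
      (hH.app_mem_of_piC_mem h r)
  rcases hH.negT_mem_or_mem_of_impC_mem himp with hrefl | hst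
  · exact absurd hrefl (hH.nabla_eq_r s)
  · exact hst

end HintikkaHOL
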